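/- Let (b, B, m, μ) be an admissible parameter set and assume K is regular. Then for every u ∈ K there exists a unique pair (φ(·,u), ψ(·,u)) of continuously differentiable functions on [0,∞), with φ(·,u) taking values in [0,∞) and ψ(·,u) taking values in K, such that ∂φ/∂t(t,u) = F(ψ(t,u)), ∂ψ/∂t(t,u) = R(ψ(t,u)) for all t ≥ 0, φ(0,u) = 0 and ψ(0,u) = u. -/

import Mathlib

/-!
The vector field `R` is Lipschitz on bounded parts of `K`: the Lévy integrand is of order
`‖ξ‖ ^ 2 ‖u - v‖`, and the jump measures `ν_x` have total mass `⟪μ(K \ {0}), x⟫`. It is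
quasi-monotone (`⟪u, x⟫ = 0 → 0 ≤ ⟪R u, x⟫`, from the admissibility of `B`) and of linear growth
(`⟪R u, u⟫ ≤ ‖B*‖ ‖u‖ ^ 2 + ‖μ(K \ {0})‖ ‖u‖`). Bounds on pairings with `K` become norm bounds
through the Moreau decomposition `z = proj z - (proj z - z)` into orthogonal elements of `K`.

Precomposing `R` with a Lipschitz retraction onto `K ∩ closedBall 0 r` gives a globally Lipschitz
field. Its Picard–Lindelöf solution stays in `K`, because quasi-monotonicity keeps the distance to
`K` from growing, and stays in the ball by Grönwall, so it solves `ψ' = R(ψ)`. Lipschitz uniqueness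
glues these solutions over `[0, n]` and gives uniqueness; finally `φ = ∫ F(ψ)`, and `F ≥ 0` on `K`
by the drift condition on `b`.
-/

open MeasureTheory Filter
open scoped RealInnerProductSpace Topology ENNReal

noncomputable section

def IsSelfDualCone {H : Type*} [NormedAddCommGroup H] [InnerProductSpace ℝ H]
    (K : Set H) : Prop :=
  K = {x : H | ∀ y ∈ K, 0 ≤ ⟪x, y⟫}

def trunc {H : Type*} [NormedAddCommGroup H] [InnerProductSpace ℝ H] (ξ : H) : H :=
  if ‖ξ‖ ≤ 1 then ξ else 0

structure AdmissibleParams (H : Type*) [NormedAddCommGroup H] [InnerProductSpace ℝ H]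
    [CompleteSpace H] [MeasurableSpace H] [BorelSpace H] (K : Set H) where
  b : H
  B : H →L[ℝ] H
  m : Measure H
  ν : H → Measure H
  muVec : Set H → H
  m_support : m ((K \ {0})ᶜ) = 0
  m_sq : IntegrableOn (fun ξ : H => ‖ξ‖ ^ 2) (K \ {0}) m
  m_chi : ∀ h : H, IntegrableOn (fun ξ : H => |⟪trunc ξ, h⟫|) (K \ {0}) m
  m_Im : ∃ Im : H, ∀ h : H, ⟪Im, h⟫ = ∫ ξ in K \ {0}, ⟪trunc ξ, h⟫ ∂m
  b_drift : ∀ v ∈ K, 0 ≤ ⟪b, v⟫ - ∫ ξ in K \ {0}, ⟪trunc ξ, v⟫ ∂m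
  ν_finite : ∀ x ∈ K, IsFiniteMeasure (ν x)
  ν_support : ∀ x ∈ K, ν x ((K \ {0})ᶜ) = 0
  ν_add : ∀ x ∈ K, ∀ y ∈ K, ν (x + y) = ν x + ν y
  ν_smul : ∀ x ∈ K, ∀ c : ℝ, 0 ≤ c → ν (c • x) = ENNReal.ofReal c • ν x
  ν_int : ∀ u ∈ K, ∀ x ∈ K, ⟪u, x⟫ = 0 →
    IntegrableOn (fun ξ : H => ⟪trunc ξ, u⟫ / ‖ξ‖ ^ 2) (K \ {0}) (ν x)
  B_quasi : ∀ u ∈ K, ∀ x ∈ K, ⟪u, x⟫ = 0 →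
    0 ≤ ⟪ContinuousLinearMap.adjoint B u, x⟫
      - ∫ ξ in K \ {0}, ⟪trunc ξ, u⟫ / ‖ξ‖ ^ 2 ∂(ν x)
  muVec_mem : ∀ S : Set H, MeasurableSet S → muVec S ∈ K
  muVec_spec : ∀ S : Set H, MeasurableSet S → ∀ x ∈ K, ⟪muVec S, x⟫ = (ν x S).toReal

def IsRegularCone {H : Type*} [NormedAddCommGroup H] [InnerProductSpace ℝ H]
    (K : Set H) : Prop :=
  ∀ (y : H) (x : ℕ → H), y ∈ K → (∀ n, x n ∈ K) →
    (∀ n, x (n + 1) - x n ∈ K) → (∀ n, y - x n ∈ K) →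
    ∃ l : H, Filter.Tendsto x Filter.atTop (nhds l)

open Set Metric
open scoped NNReal

namespace Real

lemma exp_neg_sub_exp_neg_le {s t : ℝ} (hs : 0 ≤ s) (hst : s ≤ t) :
    exp (-s) - exp (-t) ≤ t - s := by
  have h : exp (-t) = exp (-s) * exp (-(t - s)) := by rw [← exp_add]; ring_nf
  nlinarith [add_one_le_exp (-(t - s)), exp_le_one_iff.2 (neg_nonpos.2 hs), exp_pos (-s)]

lemma sub_mul_one_sub_le_exp_neg_sub_exp_neg {s t : ℝ} (hst : s ≤ t) :
    (t - s) * (1 - t) ≤ exp (-s) - exp (-t) := by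
  have h : exp (-s) = exp (-t) * exp (t - s) := by rw [← exp_add]; ring_nf
  nlinarith [add_one_le_exp (t - s), add_one_le_exp (-t), exp_pos (-t)]

end Real

namespace IsSelfDualCone

variable {H : Type*} [NormedAddCommGroup H] [InnerProductSpace ℝ H] {K : Set H}

lemma mem_iff (hK : IsSelfDualCone K) {x : H} : x ∈ K ↔ ∀ y ∈ K, 0 ≤ ⟪x, y⟫ :=
  Set.ext_iff.1 hK x

lemma inner_nonneg (hK : IsSelfDualCone K) {x y : H} (hx : x ∈ K) (hy : y ∈ K) :
    0 ≤ ⟪x, y⟫ :=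
  hK.mem_iff.1 hx y hy

lemma zero_mem (hK : IsSelfDualCone K) : (0 : H) ∈ K :=
  hK.mem_iff.2 fun _ _ => by simp

lemma add_mem (hK : IsSelfDualCone K) {x y : H} (hx : x ∈ K) (hy : y ∈ K) : x + y ∈ K :=
  hK.mem_iff.2 fun z hz => by
    rw [inner_add_left]
    exact add_nonneg (hK.inner_nonneg hx hz) (hK.inner_nonneg hy hz)

lemma smul_mem (hK : IsSelfDualCone K) {c : ℝ} (hc : 0 ≤ c) {x : H} (hx : x ∈ K) :
    c • x ∈ K :=
  hK.mem_iff.2 fun z hz => by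
    rw [real_inner_smul_left]
    exact mul_nonneg hc (hK.inner_nonneg hx hz)

lemma isClosed (hK : IsSelfDualCone K) : IsClosed K := by
  rw [hK]
  simp only [ofPred_forall]
  exact isClosed_iInter fun y => isClosed_iInter fun _ =>
    isClosed_le continuous_const (continuous_id.inner continuous_const)

lemma convex (hK : IsSelfDualCone K) : Convex ℝ K := fun _ hx _ hy _ _ ha hb _ =>
  hK.add_mem (hK.smul_mem ha hx) (hK.smul_mem hb hy)

variable [CompleteSpace H] (hK : IsSelfDualCone K)
include hK

lemma exists_inner_sub_sub_nonpos (z : H) :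
    ∃ p ∈ K, ∀ w ∈ K, ⟪z - p, w - p⟫ ≤ 0 := by
  obtain ⟨p, hp, hmin⟩ := exists_norm_eq_iInf_of_complete_convex ⟨0, hK.zero_mem⟩
    hK.isClosed.isComplete hK.convex z
  exact ⟨p, hp, (norm_eq_iInf_iff_real_inner_le_zero hK.convex hp).1 hmin⟩

/-- The metric projection onto `K`. -/
def proj (z : H) : H := (hK.exists_inner_sub_sub_nonpos z).choose

lemma proj_mem (z : H) : hK.proj z ∈ K :=
  (hK.exists_inner_sub_sub_nonpos z).choose_spec.1

lemma inner_sub_proj_sub_proj_nonpos (z : H) {w : H} (hw : w ∈ K) :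
    ⟪z - hK.proj z, w - hK.proj z⟫ ≤ 0 :=
  (hK.exists_inner_sub_sub_nonpos z).choose_spec.2 w hw

lemma proj_eq_self {z : H} (hz : z ∈ K) : hK.proj z = z :=
  (sub_eq_zero.1 (real_inner_self_nonpos.1 (hK.inner_sub_proj_sub_proj_nonpos z hz))).symm

lemma proj_sub_mem (z : H) : hK.proj z - z ∈ K :=
  hK.mem_iff.2 fun k hk => by
    have h := hK.inner_sub_proj_sub_proj_nonpos z (hK.add_mem (hK.proj_mem z) hk)
    rw [add_sub_cancel_left, ← neg_sub, inner_neg_left] at h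
    linarith

lemma inner_proj_proj_sub_eq_zero (z : H) : ⟪hK.proj z, hK.proj z - z⟫ = 0 := by
  have h₀ := hK.inner_sub_proj_sub_proj_nonpos z hK.zero_mem
  have h₂ := hK.inner_sub_proj_sub_proj_nonpos z (hK.smul_mem zero_le_two (hK.proj_mem z))
  rw [two_smul, add_sub_cancel_right] at h₂
  rw [zero_sub, inner_neg_right] at h₀
  rw [← neg_sub, inner_neg_right, real_inner_comm]
  linarith

lemma norm_proj_sub_le (z : H) {k : H} (hk : k ∈ K) : ‖hK.proj z - z‖ ≤ ‖k - z‖ := by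
  have h := hK.inner_sub_proj_sub_proj_nonpos z hk
  have hexp := norm_sub_sq_real (k - hK.proj z) (z - hK.proj z)
  rw [sub_sub_sub_cancel_right, real_inner_comm, norm_sub_rev z] at hexp
  refine (pow_le_pow_iff_left₀ (norm_nonneg _) (norm_nonneg _) two_ne_zero).1 ?_
  nlinarith [sq_nonneg ‖k - hK.proj z‖]

lemma lipschitzWith_proj : LipschitzWith 1 hK.proj := by
  refine LipschitzWith.of_dist_le_mul fun z w => ?_
  rw [dist_eq_norm, dist_eq_norm, NNReal.coe_one, one_mul]
  have hz := hK.inner_sub_proj_sub_proj_nonpos z (hK.proj_mem w)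
  have hw := hK.inner_sub_proj_sub_proj_nonpos w (hK.proj_mem z)
  have key : ‖hK.proj z - hK.proj w‖ ^ 2 ≤ ⟪z - w, hK.proj z - hK.proj w⟫ := by
    rw [← neg_sub (hK.proj z) (hK.proj w), inner_neg_right] at hz
    have e : z - w = (z - hK.proj z) - (w - hK.proj w) + (hK.proj z - hK.proj w) := by abel
    rw [e, inner_add_left, inner_sub_left, real_inner_self_eq_norm_sq]
    linarith
  have cs := real_inner_le_norm (z - w) (hK.proj z - hK.proj w)
  nlinarith [norm_nonneg (hK.proj z - hK.proj w), norm_nonneg (z - w)]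

/-- Write `z` as the difference of the orthogonal elements `proj z` and `proj z - z` of `K`. -/
lemma norm_le_of_abs_inner_le {z : H} {D : ℝ} (hD : 0 ≤ D)
    (h : ∀ x ∈ K, |⟪z, x⟫| ≤ D * ‖x‖) : ‖z‖ ≤ 2 * D := by
  set p := hK.proj z
  set q := hK.proj z - z
  have hpyth : ‖z‖ ^ 2 = ‖p‖ ^ 2 + ‖q‖ ^ 2 := by
    rw [← sub_sub_cancel p z, norm_sub_sq_real, hK.inner_proj_proj_sub_eq_zero z]
    ring
  have hz : ‖z‖ ^ 2 = ⟪z, p⟫ - ⟪z, q⟫ := by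
    rw [← inner_sub_right, sub_sub_cancel, real_inner_self_eq_norm_sq]
  have hp := abs_le.1 (h p (hK.proj_mem z))
  have hq := abs_le.1 (h q (hK.proj_sub_mem z))
  have hpz : ‖p‖ ≤ ‖z‖ := by nlinarith [norm_nonneg p, norm_nonneg z, sq_nonneg ‖q‖]
  have hqz : ‖q‖ ≤ ‖z‖ := by nlinarith [norm_nonneg q, norm_nonneg z, sq_nonneg ‖p‖]
  nlinarith [norm_nonneg z]

end IsSelfDualCone

section RadialRetraction

variable {E : Type*} [NormedAddCommGroup E] {r : ℝ}

def radialScale (r : ℝ) (z : E) : ℝ := if ‖z‖ ≤ r then 1 else r / ‖z‖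

lemma radialScale_pos (hr : 0 < r) (z : E) : 0 < radialScale r z := by
  unfold radialScale
  split_ifs with h
  · exact one_pos
  · exact div_pos hr (hr.trans (not_le.1 h))

lemma radialScale_le_one (hr : 0 < r) (z : E) : radialScale r z ≤ 1 := by
  unfold radialScale
  split_ifs with h
  · exact le_rfl
  · exact (div_le_one (hr.trans (not_le.1 h))).2 (not_le.1 h).le

lemma radialScale_mul_norm (hr : 0 < r) (z : E) : radialScale r z * ‖z‖ = min ‖z‖ r := by
  unfold radialScale
  split_ifs with h
  · rw [one_mul, min_eq_left h]
  · rw [div_mul_cancel₀ _ (hr.trans (not_le.1 h)).ne', min_eq_right (not_le.1 h).le]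

lemma radialScale_anti (hr : 0 < r) {z w : E} (h : ‖w‖ ≤ ‖z‖) :
    radialScale r z ≤ radialScale r w := by
  unfold radialScale
  split_ifs with hz hw hw
  · exact le_rfl
  · exact absurd (h.trans hz) hw
  · exact (div_le_one (hr.trans (not_le.1 hz))).2 (not_le.1 hz).le
  · exact div_le_div_of_nonneg_left hr.le (hr.trans (not_le.1 hw)) h

variable [NormedSpace ℝ E]

def radialRetraction (r : ℝ) (z : E) : E := radialScale r z • z

lemma norm_radialRetraction (hr : 0 < r) (z : E) : ‖radialRetraction r z‖ = min ‖z‖ r := by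
  rw [radialRetraction, norm_smul, Real.norm_of_nonneg (radialScale_pos hr z).le,
    radialScale_mul_norm hr]

lemma radialRetraction_of_norm_le {z : E} (h : ‖z‖ ≤ r) : radialRetraction r z = z := by
  simp [radialRetraction, radialScale, h]

lemma lipschitzWith_radialRetraction (hr : 0 < r) :
    LipschitzWith 2 (radialRetraction (E := E) r) := by
  refine LipschitzWith.of_dist_le_mul fun z w => ?_
  wlog h : ‖w‖ ≤ ‖z‖ generalizing z w
  · rw [dist_comm, dist_comm z]
    exact this w z (le_of_not_ge h)
  rw [dist_eq_norm, dist_eq_norm, radialRetraction, radialRetraction, NNReal.coe_ofNat]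
  have hab := radialScale_anti hr h
  have hnorm := min_le_min_right r h
  rw [← radialScale_mul_norm hr, ← radialScale_mul_norm hr] at hnorm
  have h₁ : ‖radialScale r z • (z - w)‖ ≤ ‖z - w‖ := by
    rw [norm_smul, Real.norm_of_nonneg (radialScale_pos hr z).le]
    exact mul_le_of_le_one_left (norm_nonneg _) (radialScale_le_one hr z)
  -- with `s = radialScale r`: `‖s w • w‖ ≤ ‖s z • z‖` gives `(s w - s z) ‖w‖ ≤ s z (‖z‖ - ‖w‖)`
  have h₂ : ‖(radialScale r w - radialScale r z) • w‖ ≤ ‖z - w‖ := by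
    rw [norm_smul, Real.norm_of_nonneg (sub_nonneg.2 hab)]
    nlinarith [norm_sub_norm_le z w, radialScale_le_one hr z, radialScale_pos hr z]
  calc ‖radialScale r z • z - radialScale r w • w‖
      = ‖radialScale r z • (z - w) - (radialScale r w - radialScale r z) • w‖ := by
        rw [smul_sub, sub_smul]; abel_nf
    _ ≤ ‖radialScale r z • (z - w)‖ + ‖(radialScale r w - radialScale r z) • w‖ :=
        norm_sub_le _ _
    _ ≤ 2 * ‖z - w‖ := by linarith

end RadialRetraction

section ODE

variable {E F : Type*} [NormedAddCommGroup E] [NormedAddCommGroup F]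

def LipschitzOnBounded (f : E → F) (s : Set E) : Prop :=
  ∀ r : ℝ, ∃ L : ℝ≥0, LipschitzOnWith L f (s ∩ closedBall 0 r)

lemma LipschitzOnBounded.continuousOn {f : E → F} {s : Set E} (hf : LipschitzOnBounded f s) :
    ContinuousOn f s := fun x hx => by
  obtain ⟨L, hL⟩ := hf (‖x‖ + 1)
  refine (hL.continuousOn x ⟨hx, mem_closedBall_zero_iff.2 (by linarith)⟩).mono_of_mem_nhdsWithin ?_
  exact inter_mem_nhdsWithin s (closedBall_mem_nhds_of_mem (mem_ball_zero_iff.2 (by linarith)))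

variable [NormedSpace ℝ E] {v : E → E} {s : Set E}

theorem LipschitzOnBounded.eqOn_Icc_of_hasDerivWithinAt (hv : LipschitzOnBounded v s)
    {f g : ℝ → E} {a b : ℝ}
    (hf : ContinuousOn f (Icc a b)) (hfs : ∀ t ∈ Icc a b, f t ∈ s)
    (hf' : ∀ t ∈ Ico a b, HasDerivWithinAt f (v (f t)) (Ici t) t)
    (hg : ContinuousOn g (Icc a b)) (hgs : ∀ t ∈ Icc a b, g t ∈ s)
    (hg' : ∀ t ∈ Ico a b, HasDerivWithinAt g (v (g t)) (Ici t) t)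
    (ha : f a = g a) : EqOn f g (Icc a b) := by
  obtain ⟨Cf, hCf⟩ := isCompact_Icc.exists_bound_of_continuousOn hf
  obtain ⟨Cg, hCg⟩ := isCompact_Icc.exists_bound_of_continuousOn hg
  obtain ⟨L, hL⟩ := hv (max Cf Cg)
  refine ODE_solution_unique_of_mem_Icc_right (v := fun _ => v)
    (s := fun _ => s ∩ closedBall 0 (max Cf Cg)) (fun _ _ => hL) hf hf' (fun t ht => ?_) hg hg'
    (fun t ht => ?_) ha
  · exact ⟨hfs t (Ico_subset_Icc_self ht), mem_closedBall_zero_iff.2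
      ((hCf t (Ico_subset_Icc_self ht)).trans (le_max_left _ _))⟩
  · exact ⟨hgs t (Ico_subset_Icc_self ht), mem_closedBall_zero_iff.2
      ((hCg t (Ico_subset_Icc_self ht)).trans (le_max_right _ _))⟩

theorem LipschitzOnBounded.eqOn_Icc_min (hv : LipschitzOnBounded v s) {f g : ℝ → E}
    {T₁ T₂ : ℝ} (hf : ∀ t ∈ Icc 0 T₁, f t ∈ s ∧ HasDerivWithinAt f (v (f t)) (Icc 0 T₁) t)
    (hg : ∀ t ∈ Icc 0 T₂, g t ∈ s ∧ HasDerivWithinAt g (v (g t)) (Icc 0 T₂) t)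
    (h0 : f 0 = g 0) : EqOn f g (Icc 0 (min T₁ T₂)) := by
  have hrestrict : ∀ (h : ℝ → E) (T : ℝ), min T₁ T₂ ≤ T →
      (∀ t ∈ Icc 0 T, h t ∈ s ∧ HasDerivWithinAt h (v (h t)) (Icc 0 T) t) →
      ContinuousOn h (Icc 0 (min T₁ T₂)) ∧ (∀ t ∈ Icc 0 (min T₁ T₂), h t ∈ s) ∧
        ∀ t ∈ Ico 0 (min T₁ T₂), HasDerivWithinAt h (v (h t)) (Ici t) t :=
    fun h T hT hh => ⟨fun t ht => ((hh t ⟨ht.1, ht.2.trans hT⟩).2.continuousWithinAt).mono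
      (Icc_subset_Icc_right hT), fun t ht => (hh t ⟨ht.1, ht.2.trans hT⟩).1,
      fun t ht => (hh t ⟨ht.1, ht.2.le.trans hT⟩).2.mono_of_mem_nhdsWithin
        (Icc_mem_nhdsGE_of_mem ⟨ht.1, ht.2.trans_le hT⟩)⟩
  obtain ⟨hfc, hfs, hf'⟩ := hrestrict f T₁ (min_le_left _ _) hf
  obtain ⟨hgc, hgs, hg'⟩ := hrestrict g T₂ (min_le_right _ _) hg
  exact hv.eqOn_Icc_of_hasDerivWithinAt hfc hfs hf' hgc hgs hg' h0

theorem LipschitzOnBounded.eqOn_Ici_of_hasDerivWithinAt (hv : LipschitzOnBounded v s)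
    {f g : ℝ → E} {a : ℝ}
    (hf : ∀ t ∈ Ici a, f t ∈ s ∧ HasDerivWithinAt f (v (f t)) (Ici a) t)
    (hg : ∀ t ∈ Ici a, g t ∈ s ∧ HasDerivWithinAt g (v (g t)) (Ici a) t)
    (ha : f a = g a) : EqOn f g (Ici a) := fun _ ht =>
  hv.eqOn_Icc_of_hasDerivWithinAt
    (fun x hx => ((hf x hx.1).2.continuousWithinAt).mono Icc_subset_Ici_self)
    (fun x hx => (hf x hx.1).1) (fun x hx => (hf x hx.1).2.mono (Ici_subset_Ici.2 hx.1))
    (fun x hx => ((hg x hx.1).2.continuousWithinAt).mono Icc_subset_Ici_self)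
    (fun x hx => (hg x hx.1).1) (fun x hx => (hg x hx.1).2.mono (Ici_subset_Ici.2 hx.1))
    ha ⟨ht, le_rfl⟩

lemma eqOn_Ici_of_hasDerivWithinAt_eq {f g f' : ℝ → E} {a : ℝ}
    (hf : ∀ t ∈ Ici a, HasDerivWithinAt f (f' t) (Ici a) t)
    (hg : ∀ t ∈ Ici a, HasDerivWithinAt g (f' t) (Ici a) t) (ha : f a = g a) :
    EqOn f g (Ici a) := fun t ht =>
  eq_of_has_deriv_right_eq (fun x hx => (hf x hx.1).mono (Ici_subset_Ici.2 hx.1))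
    (fun x hx => (hg x hx.1).mono (Ici_subset_Ici.2 hx.1))
    (fun x hx => ((hf x hx.1).continuousWithinAt).mono Icc_subset_Ici_self)
    (fun x hx => ((hg x hx.1).continuousWithinAt).mono Icc_subset_Ici_self) ha t ⟨ht, le_rfl⟩

/-- The solution is extended to `t < 0` by its initial value, so that it is continuous on `ℝ`. -/
theorem LipschitzOnBounded.exists_forall_hasDerivWithinAt_Ici (hv : LipschitzOnBounded v s)
    {x₀ : E} (hex : ∀ n : ℕ, ∃ f : ℝ → E, f 0 = x₀ ∧
      ∀ t ∈ Icc 0 (n : ℝ), f t ∈ s ∧ HasDerivWithinAt f (v (f t)) (Icc 0 (n : ℝ)) t) :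
    ∃ ψ : ℝ → E, ψ 0 = x₀ ∧ Continuous ψ ∧
      ∀ t, ψ t ∈ s ∧ (0 ≤ t → HasDerivWithinAt ψ (v (ψ t)) (Ici 0) t) := by
  choose S hS0 hS using hex
  have hagree : ∀ (m n : ℕ) (t : ℝ), t ∈ Icc 0 (m : ℝ) → t ∈ Icc 0 (n : ℝ) → S m t = S n t :=
    fun m n _ htm htn =>
      hv.eqOn_Icc_min (hS m) (hS n) (by rw [hS0, hS0]) ⟨htm.1, le_min htm.2 htn.2⟩
  have hceil : ∀ t : ℝ, max t 0 ≤ ((⌈t⌉₊ + 1 : ℕ) : ℝ) := fun t => by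
    push_cast
    exact max_le (by linarith [Nat.le_ceil t]) (by positivity)
  set ψ : ℝ → E := fun t => S (⌈t⌉₊ + 1) (max t 0)
  have hψ : ∀ (n : ℕ) (t : ℝ), t ∈ Icc 0 (n : ℝ) → ψ t = S n t := fun n t ht => by
    simp only [ψ, max_eq_left ht.1]
    exact hagree _ n t ⟨ht.1, (le_max_left t 0).trans (hceil t)⟩ ht
  have hψs : ∀ t, ψ t ∈ s := fun t => (hS (⌈t⌉₊ + 1) (max t 0) ⟨le_max_right t 0, hceil t⟩).1
  have hψ' : ∀ t, 0 ≤ t → HasDerivWithinAt ψ (v (ψ t)) (Ici 0) t := fun t ht => by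
    set n := ⌈t⌉₊ + 1
    have htn : t < n := by push_cast [n]; linarith [Nat.le_ceil t]
    rw [hψ n t ⟨ht, htn.le⟩]
    refine ((hS n t ⟨ht, htn.le⟩).2.mono_of_mem_nhdsWithin ?_).congr_of_eventuallyEq ?_
      (hψ n t ⟨ht, htn.le⟩)
    · rw [← Ici_inter_Iic]
      exact inter_mem_nhdsWithin _ (Iic_mem_nhds htn)
    · filter_upwards [inter_mem_nhdsWithin (Ici 0) (Iio_mem_nhds htn)] with x hx
      exact hψ n x ⟨hx.1, hx.2.le⟩
  have hψmax : (fun t => ψ (max t 0)) = ψ :=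
    funext fun t => hψ (⌈t⌉₊ + 1) _ ⟨le_max_right t 0, hceil t⟩
  refine ⟨ψ, by rw [hψ 0 0 (by simp), hS0], ?_, fun t => ⟨hψs t, hψ' t⟩⟩
  rw [← hψmax]
  exact (ContinuousOn.comp_continuous (fun t ht => (hψ' t ht).continuousWithinAt)
    (continuous_id.max continuous_const) fun t => le_max_right t 0)

theorem exists_forall_mem_Icc_hasDerivWithinAt_of_lipschitzWith [CompleteSpace E] {G : E → E}
    {L : ℝ≥0} (hG : LipschitzWith L G) {C : ℝ} (hC : ∀ x, ‖G x‖ ≤ C) (x₀ : E) {T : ℝ}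
    (hT : 0 ≤ T) :
    ∃ f : ℝ → E, f 0 = x₀ ∧ ∀ t ∈ Icc 0 T, HasDerivWithinAt f (G (f t)) (Icc 0 T) t := by
  have hC₀ : 0 ≤ C := (norm_nonneg _).trans (hC x₀)
  exact (IsPicardLindelof.of_time_independent (t₀ := ⟨0, left_mem_Icc.2 hT⟩) (x₀ := x₀)
    (a := ⟨C * T, mul_nonneg hC₀ hT⟩) (r := 0) (L := ⟨C, hC₀⟩) (fun x _ => hC x)
    hG.lipschitzOnWith (by simp [max_eq_left hT]; exact le_rfl))
    |>.exists_eq_forall_mem_Icc_hasDerivWithinAt₀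

end ODE

theorem norm_sq_le_gronwallBound_of_inner_le {H : Type*} [NormedAddCommGroup H]
    [InnerProductSpace ℝ H] {f V : ℝ → H} {a b C ε : ℝ} (hf : ContinuousOn f (Icc a b))
    (hf' : ∀ t ∈ Ico a b, HasDerivWithinAt f (V t) (Ici t) t)
    (hbound : ∀ t ∈ Ico a b, 2 * ⟪f t, V t⟫ ≤ C * ‖f t‖ ^ 2 + ε) :
    ∀ t ∈ Icc a b, ‖f t‖ ^ 2 ≤ gronwallBound (‖f a‖ ^ 2) C ε (t - a) :=
  le_gronwallBound_of_liminf_deriv_right_le (hf.norm.pow 2)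
    (fun t ht _ hr => (hf' t ht).norm_sq.liminf_right_slope_le hr) le_rfl hbound

namespace IsSelfDualCone

variable {H : Type*} [NormedAddCommGroup H] [InnerProductSpace ℝ H] [CompleteSpace H]
  {K : Set H} (hK : IsSelfDualCone K)
include hK

/-- Nagumo-type invariance: the squared distance `‖proj (f ·) - f ·‖ ^ 2` to `K` is dominated by
`‖f · - proj (f t)‖ ^ 2`, with equality at `t`, and the latter has right derivative
`-2 ⟪V t, proj (f t) - f t⟫ ≤ 0` there. -/
theorem mem_of_hasDerivWithinAt {f V : ℝ → H} {a b : ℝ} (hf : ContinuousOn f (Icc a b))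
    (hf' : ∀ t ∈ Ico a b, HasDerivWithinAt f (V t) (Ici t) t)
    (hV : ∀ t ∈ Ico a b, 0 ≤ ⟪V t, hK.proj (f t) - f t⟫) (ha : f a ∈ K) :
    ∀ t ∈ Icc a b, f t ∈ K := by
  set d : ℝ → ℝ := fun t => ‖hK.proj (f t) - f t‖ ^ 2
  have hd : ∀ t ∈ Icc a b, d t ≤ gronwallBound 0 0 0 (t - a) := by
    refine le_gronwallBound_of_liminf_deriv_right_le (f' := fun _ => 0)
      (((hK.lipschitzWith_proj.continuous.comp_continuousOn hf).sub hf).norm.pow 2)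
      (fun t ht r hr => ?_) (by simp [d, hK.proj_eq_self ha]) (fun _ _ => by simp)
    have hg := ((hf' t ht).sub_const (hK.proj (f t))).norm_sq
    have hlt : 2 * ⟪f t - hK.proj (f t), V t⟫ < r := by
      rw [← neg_sub, inner_neg_left, real_inner_comm]
      linarith [hV t ht]
    refine (hg.liminf_right_slope_le hlt).mp
      (eventually_mem_nhdsWithin.mono fun z (hz : t < z) hslope => lt_of_le_of_lt ?_ hslope)
    simp only [slope_def_field, d]
    rw [div_eq_inv_mul, norm_sub_rev (f t)]
    refine mul_le_mul_of_nonneg_left (sub_le_sub_right ?_ _) (inv_nonneg.2 (sub_pos.2 hz).le)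
    rw [norm_sub_rev (f z)]
    exact pow_le_pow_left₀ (norm_nonneg _) (hK.norm_proj_sub_le (f z) (hK.proj_mem (f t))) 2
  intro t ht
  have h := hd t ht
  rw [gronwallBound_ε0_δ0] at h
  have hzero : hK.proj (f t) - f t = 0 :=
    norm_eq_zero.1 (pow_eq_zero_iff two_ne_zero |>.1 (le_antisymm h (sq_nonneg _)))
  rw [← sub_eq_zero.1 hzero]
  exact hK.proj_mem _

variable {R : H → H} {r : ℝ}

def truncField (R : H → H) (r : ℝ) (z : H) : H := R (radialRetraction r (hK.proj z))

lemma radialRetraction_proj_mem (hr : 0 < r) (z : H) :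
    radialRetraction r (hK.proj z) ∈ K ∩ closedBall 0 r :=
  ⟨hK.smul_mem (radialScale_pos hr _).le (hK.proj_mem z),
    mem_closedBall_zero_iff.2 ((norm_radialRetraction hr _).trans_le (min_le_right _ _))⟩

lemma lipschitzWith_truncField (hr : 0 < r) {L : ℝ≥0}
    (hL : LipschitzOnWith L R (K ∩ closedBall 0 r)) :
    LipschitzWith (L * 2) (hK.truncField R r) :=
  (lipschitzOnWith_univ.1 <| hL.comp
    ((lipschitzWith_radialRetraction hr).comp hK.lipschitzWith_proj).lipschitzOnWith
    fun z _ => hK.radialRetraction_proj_mem hr z).weaken (by rw [mul_one])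

lemma norm_truncField_le (hr : 0 < r) {L : ℝ≥0} (hL : LipschitzOnWith L R (K ∩ closedBall 0 r))
    (z : H) : ‖hK.truncField R r z‖ ≤ ‖R 0‖ + L * r := by
  have hw := hK.radialRetraction_proj_mem hr z
  have h := hL.norm_sub_le hw ⟨hK.zero_mem, mem_closedBall_self hr.le⟩
  rw [sub_zero] at h
  calc ‖hK.truncField R r z‖ ≤ ‖R 0‖ + ‖hK.truncField R r z - R 0‖ :=
        norm_le_norm_add_norm_sub' _ _
    _ ≤ ‖R 0‖ + L * r := by
        gcongr
        exact h.trans (mul_le_mul_of_nonneg_left (mem_closedBall_zero_iff.1 hw.2) L.2)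

lemma inner_truncField_proj_sub_nonneg (hr : 0 < r)
    (hqm : ∀ u ∈ K, ∀ x ∈ K, ⟪u, x⟫ = 0 → 0 ≤ ⟪R u, x⟫) (z : H) :
    0 ≤ ⟪hK.truncField R r z, hK.proj z - z⟫ :=
  hqm _ (hK.radialRetraction_proj_mem hr z).1 _ (hK.proj_sub_mem z) <| by
    rw [radialRetraction, real_inner_smul_left, hK.inner_proj_proj_sub_eq_zero, mul_zero]

lemma inner_truncField_self_le (hr : 0 < r) {a c : ℝ} (ha : 0 ≤ a)
    (hgrowth : ∀ u ∈ K, ⟪R u, u⟫ ≤ a * ‖u‖ ^ 2 + c * ‖u‖) {z : H} (hz : z ∈ K) :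
    ⟪hK.truncField R r z, z⟫ ≤ a * ‖z‖ ^ 2 + c * ‖z‖ := by
  set l := radialScale r z
  have hl₀ : 0 < l := radialScale_pos hr z
  have h := hgrowth (l • z) (hK.smul_mem hl₀.le hz)
  rw [real_inner_smul_right, norm_smul, Real.norm_of_nonneg hl₀.le] at h
  rw [truncField, hK.proj_eq_self hz, radialRetraction]
  have h' : ⟪R (l • z), z⟫ ≤ a * l * ‖z‖ ^ 2 + c * ‖z‖ :=
    le_of_mul_le_mul_left (by linarith) hl₀
  nlinarith [mul_le_mul_of_nonneg_left (radialScale_le_one hr z) (mul_nonneg ha (sq_nonneg ‖z‖))]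

lemma truncField_eq {z : H} (hz : z ∈ K) (hzr : ‖z‖ ≤ r) : hK.truncField R r z = R z := by
  rw [truncField, hK.proj_eq_self hz, radialRetraction_of_norm_le hzr]

/-- Run Picard–Lindelöf for `truncField R r`, with `r` beyond the Grönwall bound for `‖f‖`: the
solution stays in `K` by quasi-monotonicity and in the ball by Grönwall, where the field is `R`. -/
theorem exists_forall_mem_Icc_hasDerivWithinAt (hlip : LipschitzOnBounded R K)
    (hqm : ∀ u ∈ K, ∀ x ∈ K, ⟪u, x⟫ = 0 → 0 ≤ ⟪R u, x⟫) {a c : ℝ} (ha : 0 ≤ a) (hc : 0 ≤ c)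
    (hgrowth : ∀ u ∈ K, ⟪R u, u⟫ ≤ a * ‖u‖ ^ 2 + c * ‖u‖) {x₀ : H} (hx₀ : x₀ ∈ K) {T : ℝ}
    (hT : 0 ≤ T) :
    ∃ f : ℝ → H, f 0 = x₀ ∧ ∀ t ∈ Icc 0 T, f t ∈ K ∧ HasDerivWithinAt f (R (f t)) (Icc 0 T) t := by
  set r := √(gronwallBound (‖x₀‖ ^ 2) (2 * a + c) c T) + 1
  have hr : 0 < r := by positivity
  obtain ⟨L, hL⟩ := hlip r
  obtain ⟨f, hf0, hf⟩ := exists_forall_mem_Icc_hasDerivWithinAt_of_lipschitzWith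
    (hK.lipschitzWith_truncField hr hL) (hK.norm_truncField_le hr hL) x₀ hT
  have hfc : ContinuousOn f (Icc 0 T) := fun t ht => (hf t ht).continuousWithinAt
  have hf' : ∀ t ∈ Ico 0 T, HasDerivWithinAt f (hK.truncField R r (f t)) (Ici t) t :=
    fun t ht => (hf t (Ico_subset_Icc_self ht)).mono_of_mem_nhdsWithin (Icc_mem_nhdsGE_of_mem ht)
  have hfK : ∀ t ∈ Icc 0 T, f t ∈ K := hK.mem_of_hasDerivWithinAt hfc hf'
    (fun t _ => hK.inner_truncField_proj_sub_nonneg hr hqm _) (hf0 ▸ hx₀)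
  have hgrowth' : ∀ t ∈ Ico 0 T,
      2 * ⟪f t, hK.truncField R r (f t)⟫ ≤ (2 * a + c) * ‖f t‖ ^ 2 + c := fun t ht => by
    have h := hK.inner_truncField_self_le hr ha hgrowth (hfK t (Ico_subset_Icc_self ht))
    rw [real_inner_comm]
    nlinarith [sq_nonneg (‖f t‖ - 1)]
  have hfr : ∀ t ∈ Icc 0 T, ‖f t‖ ≤ r := fun t ht => by
    have h := norm_sq_le_gronwallBound_of_inner_le hfc hf' hgrowth' t ht
    rw [hf0, sub_zero] at h
    have hmono := gronwallBound_mono (K := 2 * a + c) (sq_nonneg ‖x₀‖) hc (by positivity) ht.2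
    linarith [Real.le_sqrt_of_sq_le (h.trans hmono)]
  refine ⟨f, hf0, fun t ht => ⟨hfK t ht, ?_⟩⟩
  rw [← hK.truncField_eq (R := R) (hfK t ht) (hfr t ht)]
  exact hf t ht

end IsSelfDualCone

section LevyIntegrand

variable {H : Type*} [NormedAddCommGroup H] [InnerProductSpace ℝ H]

def levyIntegrand (u ξ : H) : ℝ := Real.exp (-⟪ξ, u⟫) - 1 + ⟪trunc ξ, u⟫

lemma levyIntegrand_zero_left (ξ : H) : levyIntegrand 0 ξ = 0 := by
  simp [levyIntegrand]

lemma measurable_trunc [MeasurableSpace H] [BorelSpace H] : Measurable (trunc : H → H) :=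
  Measurable.ite (isClosed_le continuous_norm continuous_const).measurableSet measurable_id
    measurable_const

lemma measurable_levyIntegrand [MeasurableSpace H] [BorelSpace H] (u : H) :
    Measurable (levyIntegrand u) := by
  have hinner : Measurable fun ξ : H => ⟪ξ, u⟫ := (continuous_id.inner continuous_const).measurable
  exact (hinner.neg.exp.sub_const 1).add (hinner.comp measurable_trunc)

lemma levyIntegrand_le_inner_trunc {u ξ : H} (h : 0 ≤ ⟪ξ, u⟫) :
    levyIntegrand u ξ ≤ ⟪trunc ξ, u⟫ := by
  have := Real.exp_le_one_iff.2 (neg_nonpos.2 h)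
  unfold levyIntegrand
  linarith

lemma neg_sq_le_levyIntegrand (u ξ : H) : -‖ξ‖ ^ 2 ≤ levyIntegrand u ξ := by
  unfold levyIntegrand trunc
  split_ifs with hξ
  · nlinarith [Real.add_one_le_exp (-⟪ξ, u⟫)]
  · rw [inner_zero_left]
    nlinarith [Real.exp_pos (-⟪ξ, u⟫), not_le.1 hξ]

/-- The integrand is of second order in `⟪ξ, u⟫` for `‖ξ‖ ≤ 1` and of first order beyond. -/
lemma abs_levyIntegrand_sub_le {u v ξ : H} {r : ℝ} (hu : 0 ≤ ⟪ξ, u⟫) (hv : 0 ≤ ⟪ξ, v⟫)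
    (hur : ‖u‖ ≤ r) (hvr : ‖v‖ ≤ r) :
    |levyIntegrand u ξ - levyIntegrand v ξ| ≤ max r 1 * ‖ξ‖ ^ 2 * ‖u - v‖ := by
  wlog h : ⟪ξ, u⟫ ≤ ⟪ξ, v⟫ generalizing u v
  · rw [abs_sub_comm, norm_sub_rev]
    exact this hv hu hvr hur (le_of_not_ge h)
  have hvu : ⟪ξ, v⟫ - ⟪ξ, u⟫ ≤ ‖ξ‖ * ‖u - v‖ := by
    rw [← inner_sub_right, norm_sub_rev]
    exact real_inner_le_norm _ _
  have hlow := Real.sub_mul_one_sub_le_exp_neg_sub_exp_neg h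
  have hup := Real.exp_neg_sub_exp_neg_le hu h
  have hr1 := le_max_right r 1
  unfold levyIntegrand trunc
  split_ifs with hξ
  · have hv' : ⟪ξ, v⟫ ≤ ‖ξ‖ * r :=
      (real_inner_le_norm _ _).trans (mul_le_mul_of_nonneg_left hvr (norm_nonneg _))
    rw [abs_sub_comm, abs_of_nonneg (by linarith)]
    calc _ ≤ ⟪ξ, v⟫ * (⟪ξ, v⟫ - ⟪ξ, u⟫) := by linarith
      _ ≤ (‖ξ‖ * r) * (‖ξ‖ * ‖u - v‖) := mul_le_mul hv' hvu (by linarith)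
          (mul_nonneg (norm_nonneg _) ((norm_nonneg _).trans hvr))
      _ ≤ max r 1 * ‖ξ‖ ^ 2 * ‖u - v‖ := by
        nlinarith [le_max_left r 1, mul_nonneg (sq_nonneg ‖ξ‖) (norm_nonneg (u - v))]
  · have hexp := Real.exp_le_exp.2 (neg_le_neg h)
    rw [inner_zero_left, inner_zero_left, abs_of_nonneg (by linarith)]
    nlinarith [not_le.1 hξ, norm_nonneg (u - v), mul_nonneg (sq_nonneg ‖ξ‖) (norm_nonneg (u - v))]

lemma abs_levyIntegrand_sub_div_le {u v ξ : H} {r : ℝ} (hu : 0 ≤ ⟪ξ, u⟫) (hv : 0 ≤ ⟪ξ, v⟫)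
    (hur : ‖u‖ ≤ r) (hvr : ‖v‖ ≤ r) (hξ : ξ ≠ 0) :
    |levyIntegrand u ξ / ‖ξ‖ ^ 2 - levyIntegrand v ξ / ‖ξ‖ ^ 2| ≤ max r 1 * ‖u - v‖ := by
  have hξ2 : 0 < ‖ξ‖ ^ 2 := by positivity
  rw [← sub_div, abs_div, abs_of_pos hξ2, div_le_iff₀ hξ2]
  linarith [abs_levyIntegrand_sub_le hu hv hur hvr]

end LevyIntegrand

lemma IsSelfDualCone.measurableSet_diff_zero {H : Type*} [NormedAddCommGroup H]
    [InnerProductSpace ℝ H] [MeasurableSpace H] [BorelSpace H] {K : Set H}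
    (hK : IsSelfDualCone K) : MeasurableSet (K \ {0}) :=
  hK.isClosed.measurableSet.diff (measurableSet_singleton 0)

namespace AdmissibleParams

open ContinuousLinearMap

variable {H : Type*} [NormedAddCommGroup H] [InnerProductSpace ℝ H] [CompleteSpace H]
  [MeasurableSpace H] [BorelSpace H] {K : Set H}

def F (p : AdmissibleParams H K) (u : H) : ℝ := ⟪p.b, u⟫ - ∫ ξ in K \ {0}, levyIntegrand u ξ ∂p.m

def IsRiccatiR (p : AdmissibleParams H K) (R : H → H) : Prop :=
  ∀ u ∈ K, ∀ x ∈ K, ⟪R u, x⟫ =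
    ⟪adjoint p.B u, x⟫ - ∫ ξ in K \ {0}, levyIntegrand u ξ / ‖ξ‖ ^ 2 ∂(p.ν x)

variable {p : AdmissibleParams H K} (hK : IsSelfDualCone K)
include hK

lemma integrableOn_levyIntegrand {u : H} (hu : u ∈ K) :
    IntegrableOn (levyIntegrand u) (K \ {0}) p.m := by
  refine Integrable.mono' (p.m_sq.const_mul (max ‖u‖ 1 * ‖u‖))
    (measurable_levyIntegrand u).aestronglyMeasurable ?_
  filter_upwards [ae_restrict_mem hK.measurableSet_diff_zero] with ξ hξ
  have h := abs_levyIntegrand_sub_le (hK.inner_nonneg hξ.1 hu) (hK.inner_nonneg hξ.1 hK.zero_mem)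
    le_rfl (by simp)
  rw [levyIntegrand_zero_left, sub_zero, sub_zero] at h
  rw [Real.norm_eq_abs]
  linarith

lemma F_nonneg {u : H} (hu : u ∈ K) : 0 ≤ p.F u := by
  have hchi : IntegrableOn (fun ξ => ⟪trunc ξ, u⟫) (K \ {0}) p.m :=
    Integrable.mono' (p.m_chi u)
      ((continuous_id.inner continuous_const).measurable.comp measurable_trunc).aestronglyMeasurable
      (Eventually.of_forall fun _ => le_rfl)
  have hle := setIntegral_mono_on (integrableOn_levyIntegrand hK hu) hchi
    hK.measurableSet_diff_zero fun ξ hξ => levyIntegrand_le_inner_trunc (hK.inner_nonneg hξ.1 hu)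
  have := p.b_drift u hu
  unfold F
  linarith

lemma abs_integral_levyIntegrand_sub_le {u v : H} (hu : u ∈ K) (hv : v ∈ K) {r : ℝ}
    (hur : ‖u‖ ≤ r) (hvr : ‖v‖ ≤ r) :
    |(∫ ξ in K \ {0}, levyIntegrand u ξ ∂p.m) - ∫ ξ in K \ {0}, levyIntegrand v ξ ∂p.m|
      ≤ max r 1 * (∫ ξ in K \ {0}, ‖ξ‖ ^ 2 ∂p.m) * ‖u - v‖ := by
  have hu' := integrableOn_levyIntegrand (p := p) hK hu
  have hv' := integrableOn_levyIntegrand (p := p) hK hv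
  rw [← integral_sub hu' hv']
  calc _ ≤ ∫ ξ in K \ {0}, |levyIntegrand u ξ - levyIntegrand v ξ| ∂p.m := by
        simpa only [Real.norm_eq_abs] using
          norm_integral_le_integral_norm fun ξ => levyIntegrand u ξ - levyIntegrand v ξ
    _ ≤ ∫ ξ in K \ {0}, (max r 1 * ‖u - v‖) * ‖ξ‖ ^ 2 ∂p.m :=
        setIntegral_mono_on (hu'.sub hv').abs (p.m_sq.const_mul _) hK.measurableSet_diff_zero
          fun ξ hξ => by
            have := abs_levyIntegrand_sub_le (hK.inner_nonneg hξ.1 hu) (hK.inner_nonneg hξ.1 hv)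
              hur hvr
            linarith
    _ = _ := by rw [integral_const_mul]; ring

lemma lipschitzOnBounded_F : LipschitzOnBounded p.F K := fun r => by
  refine ⟨_, LipschitzOnWith.of_dist_le'
    (K := ‖p.b‖ + max r 1 * ∫ ξ in K \ {0}, ‖ξ‖ ^ 2 ∂p.m) fun u hu v hv => ?_⟩
  have hI := abs_integral_levyIntegrand_sub_le (p := p) hK hu.1 hv.1 (mem_closedBall_zero_iff.1 hu.2)
    (mem_closedBall_zero_iff.1 hv.2)
  have hb : |⟪p.b, u⟫ - ⟪p.b, v⟫| ≤ ‖p.b‖ * ‖u - v‖ := by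
    rw [← inner_sub_right]
    exact abs_real_inner_le_norm _ _
  have hsplit : p.F u - p.F v = (⟪p.b, u⟫ - ⟪p.b, v⟫) - ((∫ ξ in K \ {0}, levyIntegrand u ξ ∂p.m)
      - ∫ ξ in K \ {0}, levyIntegrand v ξ ∂p.m) := by
    unfold F; ring
  rw [Real.dist_eq, dist_eq_norm, hsplit]
  calc _ ≤ _ := abs_sub _ _
    _ ≤ (‖p.b‖ + max r 1 * ∫ ξ in K \ {0}, ‖ξ‖ ^ 2 ∂p.m) * ‖u - v‖ := by linarith

lemma integrableOn_levyIntegrand_div {u x : H} (hu : u ∈ K) (hx : x ∈ K) :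
    IntegrableOn (fun ξ => levyIntegrand u ξ / ‖ξ‖ ^ 2) (K \ {0}) (p.ν x) := by
  have := p.ν_finite x hx
  refine Integrable.mono' (integrable_const (max ‖u‖ 1 * ‖u‖))
    ((measurable_levyIntegrand u).div (continuous_norm.pow 2).measurable).aestronglyMeasurable ?_
  filter_upwards [ae_restrict_mem hK.measurableSet_diff_zero] with ξ hξ
  have h := abs_levyIntegrand_sub_div_le (hK.inner_nonneg hξ.1 hu)
    (hK.inner_nonneg hξ.1 hK.zero_mem) le_rfl (by simp) hξ.2
  rwa [levyIntegrand_zero_left, zero_div, sub_zero, sub_zero, ← Real.norm_eq_abs] at h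

lemma measureReal_ν_eq_inner {x : H} (hx : x ∈ K) :
    (p.ν x).real (K \ {0}) = ⟪p.muVec (K \ {0}), x⟫ :=
  (p.muVec_spec _ hK.measurableSet_diff_zero x hx).symm

namespace IsRiccatiR

variable {R : H → H} (hR : p.IsRiccatiR R)
include hR

lemma abs_inner_sub_le {u v x : H} (hu : u ∈ K) (hv : v ∈ K) (hx : x ∈ K) {r : ℝ}
    (hur : ‖u‖ ≤ r) (hvr : ‖v‖ ≤ r) :
    |⟪R u - R v, x⟫| ≤ (‖adjoint p.B‖ + max r 1 * ‖p.muVec (K \ {0})‖) * ‖u - v‖ * ‖x‖ := by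
  have := p.ν_finite x hx
  have hB : |⟪adjoint p.B (u - v), x⟫| ≤ ‖adjoint p.B‖ * ‖u - v‖ * ‖x‖ :=
    (abs_real_inner_le_norm _ _).trans
      (mul_le_mul_of_nonneg_right ((adjoint p.B).le_opNorm _) (norm_nonneg _))
  have hI : |(∫ ξ in K \ {0}, levyIntegrand u ξ / ‖ξ‖ ^ 2 ∂(p.ν x))
      - ∫ ξ in K \ {0}, levyIntegrand v ξ / ‖ξ‖ ^ 2 ∂(p.ν x)|
      ≤ max r 1 * ‖u - v‖ * (p.ν x).real (K \ {0}) := by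
    rw [← integral_sub (integrableOn_levyIntegrand_div hK hu hx)
      (integrableOn_levyIntegrand_div hK hv hx), ← Real.norm_eq_abs]
    exact norm_setIntegral_le_of_norm_le_const (measure_lt_top _ _) fun ξ hξ =>
      abs_levyIntegrand_sub_div_le (hK.inner_nonneg hξ.1 hu) (hK.inner_nonneg hξ.1 hv) hur hvr hξ.2
  have hν : (p.ν x).real (K \ {0}) ≤ ‖p.muVec (K \ {0})‖ * ‖x‖ :=
    (measureReal_ν_eq_inner hK hx).trans_le (real_inner_le_norm _ _)
  have hsplit : ⟪R u - R v, x⟫ = ⟪adjoint p.B (u - v), x⟫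
      - ((∫ ξ in K \ {0}, levyIntegrand u ξ / ‖ξ‖ ^ 2 ∂(p.ν x))
        - ∫ ξ in K \ {0}, levyIntegrand v ξ / ‖ξ‖ ^ 2 ∂(p.ν x)) := by
    rw [inner_sub_left, hR u hu x hx, hR v hv x hx, map_sub, inner_sub_left]
    ring
  have hmax : 0 ≤ max r 1 * ‖u - v‖ :=
    mul_nonneg (zero_le_one.trans (le_max_right r 1)) (norm_nonneg _)
  rw [hsplit]
  calc _ ≤ _ := abs_sub _ _
    _ ≤ ‖adjoint p.B‖ * ‖u - v‖ * ‖x‖ + max r 1 * ‖u - v‖ * (‖p.muVec (K \ {0})‖ * ‖x‖) :=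
        add_le_add hB (hI.trans (mul_le_mul_of_nonneg_left hν hmax))
    _ = _ := by ring

lemma lipschitzOnBounded : LipschitzOnBounded R K := fun r => by
  refine ⟨_, LipschitzOnWith.of_dist_le' (K := 2 * (‖adjoint p.B‖ + max r 1 * ‖p.muVec (K \ {0})‖))
    fun u hu v hv => ?_⟩
  rw [dist_eq_norm, dist_eq_norm, mul_assoc]
  refine hK.norm_le_of_abs_inner_le (by positivity) fun x hx => ?_
  exact (hR.abs_inner_sub_le hK hu.1 hv.1 hx (mem_closedBall_zero_iff.1 hu.2)
    (mem_closedBall_zero_iff.1 hv.2)).trans_eq (by ring)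

lemma inner_nonneg_of_inner_eq_zero {u x : H} (hu : u ∈ K) (hx : x ∈ K) (hux : ⟪u, x⟫ = 0) :
    0 ≤ ⟪R u, x⟫ := by
  have := p.ν_finite x hx
  have hle := setIntegral_mono_on (integrableOn_levyIntegrand_div hK hu hx)
    (p.ν_int u hu x hx hux) hK.measurableSet_diff_zero fun ξ hξ =>
      div_le_div_of_nonneg_right (levyIntegrand_le_inner_trunc (hK.inner_nonneg hξ.1 hu))
        (sq_nonneg _)
  rw [hR u hu x hx]
  linarith [p.B_quasi u hu x hx hux]

lemma inner_self_le {u : H} (hu : u ∈ K) :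
    ⟪R u, u⟫ ≤ ‖adjoint p.B‖ * ‖u‖ ^ 2 + ‖p.muVec (K \ {0})‖ * ‖u‖ := by
  have := p.ν_finite u hu
  have hlow := setIntegral_mono_on (integrableOn_const (μ := p.ν u) (s := K \ {0}) (C := (-1 : ℝ)))
    (integrableOn_levyIntegrand_div hK hu hu) hK.measurableSet_diff_zero fun ξ hξ => by
      rw [le_div_iff₀ (by have := hξ.2; positivity)]
      linarith [neg_sq_le_levyIntegrand u ξ]
  rw [setIntegral_const, smul_eq_mul, mul_neg_one, measureReal_ν_eq_inner hK hu] at hlow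
  have hB : ⟪adjoint p.B u, u⟫ ≤ ‖adjoint p.B‖ * ‖u‖ ^ 2 :=
    (real_inner_le_norm _ _).trans (by
      rw [sq, ← mul_assoc]
      exact mul_le_mul_of_nonneg_right ((adjoint p.B).le_opNorm u) (norm_nonneg _))
  rw [hR u hu u hu]
  linarith [real_inner_le_norm (p.muVec (K \ {0})) u]

end IsRiccatiR

end AdmissibleParams

theorem stmt_7_general {H : Type*} [NormedAddCommGroup H] [InnerProductSpace ℝ H] [CompleteSpace H]
    [MeasurableSpace H] [BorelSpace H] (K : Set H)
    (hK : IsSelfDualCone K)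
    (p : AdmissibleParams H K)
    (F : H → ℝ)
    (hF : ∀ u : H, F u = ⟪p.b, u⟫ -
      ∫ ξ in K \ {0}, (Real.exp (-⟪ξ, u⟫) - 1 + ⟪trunc ξ, u⟫) ∂p.m)
    (R : H → H)
    (hR : ∀ u ∈ K, ∀ x ∈ K, ⟪R u, x⟫ =
      ⟪ContinuousLinearMap.adjoint p.B u, x⟫
        - ∫ ξ in K \ {0}, (Real.exp (-⟪ξ, u⟫) - 1 + ⟪trunc ξ, u⟫) / ‖ξ‖ ^ 2 ∂(p.ν x))
    (u : H) (hu : u ∈ K) :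
    ∃ φ : ℝ → ℝ, ∃ ψ : ℝ → H,
      (φ 0 = 0 ∧ ψ 0 = u ∧
        (∀ t, 0 ≤ t → 0 ≤ φ t ∧ ψ t ∈ K) ∧
        (∀ t, 0 ≤ t → HasDerivWithinAt φ (F (ψ t)) (Set.Ici 0) t ∧
          HasDerivWithinAt ψ (R (ψ t)) (Set.Ici 0) t) ∧
        ContinuousOn (fun t => F (ψ t)) (Set.Ici 0) ∧
        ContinuousOn (fun t => R (ψ t)) (Set.Ici 0)) ∧
      (∀ φ' : ℝ → ℝ, ∀ ψ' : ℝ → H,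
        (φ' 0 = 0 ∧ ψ' 0 = u ∧
          (∀ t, 0 ≤ t → 0 ≤ φ' t ∧ ψ' t ∈ K) ∧
          (∀ t, 0 ≤ t → HasDerivWithinAt φ' (F (ψ' t)) (Set.Ici 0) t ∧
            HasDerivWithinAt ψ' (R (ψ' t)) (Set.Ici 0) t) ∧
          ContinuousOn (fun t => F (ψ' t)) (Set.Ici 0) ∧
          ContinuousOn (fun t => R (ψ' t)) (Set.Ici 0)) →
        ∀ t, 0 ≤ t → φ' t = φ t ∧ ψ' t = ψ t) := by
  obtain rfl : F = p.F := funext hF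
  have hR : p.IsRiccatiR R := hR
  have hRlip := hR.lipschitzOnBounded hK
  obtain ⟨ψ, hψ0, hψc, hψ⟩ := hRlip.exists_forall_hasDerivWithinAt_Ici fun n =>
    hK.exists_forall_mem_Icc_hasDerivWithinAt hRlip
      (fun _ hv _ hx => hR.inner_nonneg_of_inner_eq_zero hK hv hx) (norm_nonneg _)
      (norm_nonneg _) (fun _ hv => hR.inner_self_le hK hv) hu n.cast_nonneg
  have hFψ : Continuous fun t => p.F (ψ t) :=
    (AdmissibleParams.lipschitzOnBounded_F hK).continuousOn.comp_continuous hψc fun t => (hψ t).1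
  have hRψ : Continuous fun t => R (ψ t) :=
    hRlip.continuousOn.comp_continuous hψc fun t => (hψ t).1
  set φ := fun t => ∫ s in (0 : ℝ)..t, p.F (ψ s)
  have hφ : ∀ t, HasDerivAt φ (p.F (ψ t)) t := fun t =>
    (hFψ.integral_hasStrictDerivAt 0 t).hasDerivAt
  refine ⟨φ, ψ, ⟨intervalIntegral.integral_same, hψ0, fun t ht =>
    ⟨intervalIntegral.integral_nonneg ht fun s _ => AdmissibleParams.F_nonneg hK (hψ s).1,
      (hψ t).1⟩, fun t ht => ⟨(hφ t).hasDerivWithinAt, (hψ t).2 ht⟩, hFψ.continuousOn,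
    hRψ.continuousOn⟩, ?_⟩
  rintro φ' ψ' ⟨hφ'0, hψ'0, hmem', hderiv', -, -⟩
  have hψ' : EqOn ψ' ψ (Ici 0) := hRlip.eqOn_Ici_of_hasDerivWithinAt
    (fun t ht => ⟨(hmem' t ht).2, (hderiv' t ht).2⟩) (fun t ht => ⟨(hψ t).1, (hψ t).2 ht⟩)
    (hψ'0.trans hψ0.symm)
  have hφ' : EqOn φ' φ (Ici 0) := eqOn_Ici_of_hasDerivWithinAt_eq
    (fun t ht => hψ' ht ▸ (hderiv' t ht).1) (fun t _ => (hφ t).hasDerivWithinAt)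
    (hφ'0.trans intervalIntegral.integral_same.symm)
  exact fun t ht => ⟨hφ' ht, hψ' ht⟩

/-- If `K` is regular, then for every `u ∈ K` the generalized Riccati
equations `∂φ/∂t = F(ψ)`, `∂ψ/∂t = R(ψ)`, `φ(0,u) = 0`, `ψ(0,u) = u` have a unique
`C¹`-solution with `φ` nonnegative and `ψ` `K`-valued. -/
theorem stmt_7 {H : Type*} [NormedAddCommGroup H] [InnerProductSpace ℝ H] [CompleteSpace H]
    [MeasurableSpace H] [BorelSpace H] (K : Set H)
    (hK : IsSelfDualCone K) (hKgen : ∀ z : H, ∃ x ∈ K, ∃ y ∈ K, z = x - y)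
    (hreg : IsRegularCone K)
    (p : AdmissibleParams H K)
    (F : H → ℝ)
    (hF : ∀ u : H, F u = ⟪p.b, u⟫ -
      ∫ ξ in K \ {0}, (Real.exp (-⟪ξ, u⟫) - 1 + ⟪trunc ξ, u⟫) ∂p.m)
    (R : H → H)
    (hR : ∀ u ∈ K, ∀ x ∈ K, ⟪R u, x⟫ =
      ⟪ContinuousLinearMap.adjoint p.B u, x⟫
        - ∫ ξ in K \ {0}, (Real.exp (-⟪ξ, u⟫) - 1 + ⟪trunc ξ, u⟫) / ‖ξ‖ ^ 2 ∂(p.ν x))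
    (u : H) (hu : u ∈ K) :
    ∃ φ : ℝ → ℝ, ∃ ψ : ℝ → H,
      (φ 0 = 0 ∧ ψ 0 = u ∧
        (∀ t, 0 ≤ t → 0 ≤ φ t ∧ ψ t ∈ K) ∧
        (∀ t, 0 ≤ t → HasDerivWithinAt φ (F (ψ t)) (Set.Ici 0) t ∧
          HasDerivWithinAt ψ (R (ψ t)) (Set.Ici 0) t) ∧
        ContinuousOn (fun t => F (ψ t)) (Set.Ici 0) ∧
        ContinuousOn (fun t => R (ψ t)) (Set.Ici 0)) ∧
      (∀ φ' : ℝ → ℝ, ∀ ψ' : ℝ → H,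
        (φ' 0 = 0 ∧ ψ' 0 = u ∧
          (∀ t, 0 ≤ t → 0 ≤ φ' t ∧ ψ' t ∈ K) ∧
          (∀ t, 0 ≤ t → HasDerivWithinAt φ' (F (ψ' t)) (Set.Ici 0) t ∧
            HasDerivWithinAt ψ' (R (ψ' t)) (Set.Ici 0) t) ∧
          ContinuousOn (fun t => F (ψ' t)) (Set.Ici 0) ∧
          ContinuousOn (fun t => R (ψ' t)) (Set.Ici 0)) →
        ∀ t, 0 ≤ t → φ' t = φ t ∧ ψ' t = ψ t) :=
  stmt_7_general K hK p F hF R hR u hu
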